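/- arXiv:1801.09770 — 7 statements merged into one kernel-verified Lean document; each statement's English description precedes it below -/
import Mathlib

section
/- Let Q : Matrix (Fin n) (Fin n) ℝ be any matrix (a transition rate matrix). Then there exists a matrix Q̃ : Matrix (Fin m) (Fin m) ℝ such that M * Q = Q̃ * M (i.e. the coarse-grained probability vector p_B = M p_A evolves under its own generator for every initial p_A) if and only if P * Q = P * Q * P, where P = M⁺ * M. Moreover, if P * Q = P * Q * P then M * Q = (M * Q * M⁺) * M, so the reduced generator is Q̃ = M * Q * M⁺. -/
open Matrix

variable {n m : ℕ}

/-- The coarse-graining matrix of a partition `π : Fin n → Fin m`: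
`M k i = 1` if `π i = k` and `0` otherwise. -/
def cgM (π : Fin n → Fin m) : Matrix (Fin m) (Fin n) ℝ :=
  Matrix.of fun k i => if π i = k then 1 else 0

/-- The Moore–Penrose pseudoinverse of the coarse-graining matrix:
`M⁺ i k = 1 / (size of block k)` if `π i = k` and `0` otherwise. -/
noncomputable def cgMplus (π : Fin n → Fin m) : Matrix (Fin n) (Fin m) ℝ :=
  Matrix.of fun i k =>
    if π i = k then 1 / ((Finset.univ.filter fun j => π j = k).card : ℝ) else 0

/-- The coarse-graining projection `P := M⁺ * M`. -/
noncomputable def cgP (π : Fin n → Fin m) : Matrix (Fin n) (Fin n) ℝ := cgMplus π * cgM π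

lemma cgM_mul_cgMplus (π : Fin n → Fin m) (hπ : Function.Surjective π) :
    cgM π * cgMplus π = 1 := by
  ext k l
  rw [Matrix.mul_apply]
  by_cases h : k = l
  · subst h
    rw [Matrix.one_apply_eq]
    have hc : (0:ℝ) < ((Finset.univ.filter fun j => π j = k).card : ℝ) := by
      obtain ⟨i, hi⟩ := hπ k
      have : i ∈ Finset.univ.filter fun j => π j = k := by simp [hi]
      exact_mod_cast Finset.card_pos.mpr ⟨i, this⟩
    calc ∑ i, cgM π k i * cgMplus π i k
        = ∑ i ∈ Finset.univ.filter (fun j => π j = k),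
            1 / ((Finset.univ.filter fun j => π j = k).card : ℝ) := by
          rw [Finset.sum_filter]
          apply Finset.sum_congr rfl
          intro i _
          by_cases hi : π i = k <;> simp [cgM, cgMplus, hi]
      _ = 1 := by
          rw [Finset.sum_const, nsmul_eq_mul]
          field_simp
  · rw [Matrix.one_apply_ne h]
    apply Finset.sum_eq_zero
    intro i _
    simp only [cgM, cgMplus, Matrix.of_apply]
    by_cases h1 : π i = k
    · have h2 : π i ≠ l := fun hl => h (h1 ▸ hl ▸ rfl)
      rw [if_pos h1, if_neg h2, mul_zero]
    · rw [if_neg h1, zero_mul]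

/-- The coarse-grained probability vector `p_B = M p_A` evolves under its own generator
(i.e. there is `Q̃` with `M * Q = Qt * M`) iff `P * Q = P * Q * P`; moreover in that case
the reduced generator is `Q̃ = M * Q * M⁺`. -/
theorem cg_reducible_iff_compatible (π : Fin n → Fin m) (hπ : Function.Surjective π)
    (Q : Matrix (Fin n) (Fin n) ℝ) :
    ((∃ Qt : Matrix (Fin m) (Fin m) ℝ, cgM π * Q = Qt * cgM π) ↔
      cgP π * Q = cgP π * Q * cgP π) ∧
    (cgP π * Q = cgP π * Q * cgP π →
      cgM π * Q = (cgM π * Q * cgMplus π) * cgM π) := by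
  have hMMp : cgM π * cgMplus π = 1 := cgM_mul_cgMplus π hπ
  have hMP : cgM π * cgP π = cgM π := by
    rw [cgP, ← Matrix.mul_assoc, hMMp, Matrix.one_mul]
  have hsecond : cgP π * Q = cgP π * Q * cgP π →
      cgM π * Q = (cgM π * Q * cgMplus π) * cgM π := by
    intro h
    have h2 : cgM π * (cgP π * Q) = cgM π * (cgP π * Q * cgP π) :=
      congrArg (fun X => cgM π * X) h
    rw [← Matrix.mul_assoc, hMP, ← Matrix.mul_assoc, ← Matrix.mul_assoc, hMP] at h2
    conv_lhs => rw [h2]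
    rw [cgP, ← Matrix.mul_assoc]
  refine ⟨⟨?_, fun h => ⟨cgM π * Q * cgMplus π, hsecond h⟩⟩, hsecond⟩
  rintro ⟨Qt, hQt⟩
  have h1 : cgP π * Q = cgMplus π * Qt * cgM π := by
    rw [cgP, Matrix.mul_assoc, hQt, ← Matrix.mul_assoc]
  rw [h1, Matrix.mul_assoc (cgMplus π * Qt) (cgM π) (cgP π), hMP]
end

section
/- Let Q : Matrix (Fin n) (Fin n) ℝ be any matrix, and for i : Fin n and k' : Fin m define the total transition rate r(i, k') := ∑_{j' : Fin n, π j' = k'} Q j' i. Then P * Q = P * Q * P if and only if for every k' : Fin m and all i j : Fin n with π i = π j one has r(i, k') = r(j, k'); i.e. the compatibility condition holds exactly when the total rate of transitions into each block is constant over the states of every block. -/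
open Matrix

variable {n m : ℕ}

/-- The total rate of transitions from micro state `i` into block `k'`:
`r(i, k') = ∑_{j' : π j' = k'} Q j' i`. -/
def totalRate (π : Fin n → Fin m) (Q : Matrix (Fin n) (Fin n) ℝ)
    (i : Fin n) (k' : Fin m) : ℝ :=
  ∑ j' ∈ Finset.univ.filter fun j' => π j' = k', Q j' i

noncomputable def blk (π : Fin n → Fin m) (k : Fin m) : ℝ :=
  ((Finset.univ.filter fun j => π j = k).card : ℝ)

lemma cgP_apply (π : Fin n → Fin m) (i l : Fin n) :
    cgP π i l = if π l = π i then 1 / blk π (π i) else 0 := by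
  simp only [cgP, cgMplus, cgM, Matrix.mul_apply, Matrix.of_apply]
  rw [Finset.sum_eq_single (π i)]
  · simp [blk]
  · intro k _ hk
    simp [Ne.symm hk]
  · simp

lemma PQ_apply (π : Fin n → Fin m) (Q : Matrix (Fin n) (Fin n) ℝ) (i j : Fin n) :
    (cgP π * Q) i j = (1 / blk π (π i)) * totalRate π Q j (π i) := by
  simp only [Matrix.mul_apply, cgP_apply, totalRate, Finset.mul_sum]
  rw [Finset.sum_filter]
  exact Finset.sum_congr rfl fun l _ => by by_cases h : π l = π i <;> simp [h]

lemma PQP_apply (π : Fin n → Fin m) (Q : Matrix (Fin n) (Fin n) ℝ) (i j : Fin n) :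
    (cgP π * Q * cgP π) i j = (1 / blk π (π i)) * ((1 / blk π (π j)) *
      ∑ l ∈ Finset.univ.filter fun l => π l = π j, totalRate π Q l (π i)) := by
  rw [Matrix.mul_apply]
  simp only [PQ_apply, cgP_apply]
  rw [Finset.mul_sum, Finset.mul_sum, Finset.sum_filter]
  refine Finset.sum_congr rfl fun l _ => ?_
  by_cases h : π l = π j
  · simp only [if_pos h.symm, if_pos h, h, eq_self_iff_true, if_true]; ring
  · simp only [if_neg (fun he : π j = π l => h he.symm), if_neg h, mul_zero]

lemma blk_pos (π : Fin n → Fin m) (hπ : Function.Surjective π) (k : Fin m) :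
    0 < blk π k := by
  obtain ⟨i, hi⟩ := hπ k
  have hmem : i ∈ Finset.univ.filter fun j => π j = k := by simp [hi]
  unfold blk
  exact_mod_cast Finset.card_pos.mpr ⟨i, hmem⟩

/-- The compatibility condition `P * Q = P * Q * P` holds iff the total rate of transitions
into each block is constant over the micro states of every block. -/
theorem cg_compatible_iff_uniform_rates (π : Fin n → Fin m) (hπ : Function.Surjective π)
    (Q : Matrix (Fin n) (Fin n) ℝ) :
    cgP π * Q = cgP π * Q * cgP π ↔
      ∀ (k' : Fin m) (i j : Fin n), π i = π j →
        totalRate π Q i k' = totalRate π Q j k' := by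
  have key : (cgP π * Q = cgP π * Q * cgP π) ↔
      ∀ i j : Fin n, totalRate π Q j (π i) = (1 / blk π (π j)) *
        ∑ l ∈ Finset.univ.filter fun l => π l = π j, totalRate π Q l (π i) := by
    constructor
    · intro H i j
      have h := congrFun (congrFun H i) j
      rw [PQ_apply, PQP_apply] at h
      exact mul_left_cancel₀ (one_div_ne_zero (blk_pos π hπ (π i)).ne') h
    · intro H
      funext i j
      rw [PQ_apply, PQP_apply, H i j]
  rw [key]
  constructor
  · intro H k' i j hij
    obtain ⟨i0, hi0⟩ := hπ k'
    rw [← hi0, H i0 i, H i0 j, hij]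
  · intro H i j
    have hsum : (∑ l ∈ Finset.univ.filter fun l => π l = π j, totalRate π Q l (π i))
        = blk π (π j) * totalRate π Q j (π i) := by
      rw [Finset.sum_congr rfl fun l hl => H (π i) l j (Finset.mem_filter.mp hl).2,
        Finset.sum_const, nsmul_eq_mul]
      rfl
    rw [hsum]
    field_simp [(blk_pos π hπ (π j)).ne']
end

section
/- Let T : Matrix ι ι ℂ →ₗ[ℂ] Matrix (Fin m) (Fin m) ℂ be the quantum coarse-graining map of a bipartition table, T ρ := ∑_{k l : Fin m} trace (S k l * ρ) • stdBasisMatrix l k 1. Then the orthogonal complement of the kernel of T, with respect to the Frobenius (Hilbert–Schmidt) inner product ⟨A, B⟩ = trace (Aᴴ * B) on Matrix ι ι ℂ, equals the ℂ-linear span of the bipartition operators: (ker T)ᗮ = span ℂ { S k l | k l : Fin m }. Consequently the coarse-graining projection P := T⁺ ∘ T (with T⁺ the Moore–Penrose pseudoinverse of T) is the orthogonal projection onto span ℂ { S k l }. -/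
open Matrix

variable {ι : Type*} [Fintype ι] [DecidableEq ι] {nr m : ℕ}

/-- The bipartition operator `S k l` of a bipartition table with row map `r` and
column map `c`: `(S k l) a b = 1` if `c a = k`, `c b = l` and `r a = r b`, else `0`. -/
def bpS (r : ι → Fin nr) (c : ι → Fin m) (k l : Fin m) : Matrix ι ι ℂ :=
  Matrix.of fun a b => if c a = k ∧ c b = l ∧ r a = r b then 1 else 0

/-- The quantum coarse-graining map of the bipartition table:
`T ρ = ∑ k l, trace (S k l * ρ) • stdBasisMatrix l k 1`. -/
noncomputable def cgT (r : ι → Fin nr) (c : ι → Fin m) :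
    Matrix ι ι ℂ →ₗ[ℂ] Matrix (Fin m) (Fin m) ℂ where
  toFun ρ := ∑ k : Fin m, ∑ l : Fin m,
    (bpS r c k l * ρ).trace • Matrix.single l k 1
  map_add' ρ σ := by
    simp [Matrix.mul_add, Matrix.trace_add, add_smul, Finset.sum_add_distrib]
  map_smul' t ρ := by
    simp [Matrix.mul_smul, Matrix.trace_smul, smul_smul, Finset.smul_sum]

/-- The orthogonal complement of a subspace of `Matrix ι ι ℂ` with respect to the
Frobenius (Hilbert–Schmidt) inner product `⟨A, B⟩ = trace (Aᴴ * B)`. -/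
noncomputable def frobOrth (W : Submodule ℂ (Matrix ι ι ℂ)) : Submodule ℂ (Matrix ι ι ℂ) where
  carrier := {A | ∀ B ∈ W, (Bᴴ * A).trace = 0}
  add_mem' := by
    intro A A' hA hA' B hB
    simp [Matrix.mul_add, Matrix.trace_add, hA B hB, hA' B hB]
  zero_mem' := by
    intro B hB
    simp
  smul_mem' := by
    intro t A hA B hB
    simp [Matrix.mul_smul, Matrix.trace_smul, hA B hB]

set_option linter.unusedSectionVars false

lemma frob_eq (A B : Matrix ι ι ℂ) :
    (Aᴴ * B).trace = ∑ a, ∑ b, star (A a b) * B a b := by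
  simp only [Matrix.trace, Matrix.diag, Matrix.mul_apply, Matrix.conjTranspose_apply]
  rw [Finset.sum_comm]

lemma frob_self_eq_zero {A : Matrix ι ι ℂ} (h : (Aᴴ * A).trace = 0) : A = 0 := by
  rw [frob_eq] at h
  simp only [RCLike.star_def, ← Complex.normSq_eq_conj_mul_self] at h
  have h' : ∑ a : ι, ∑ b : ι, Complex.normSq (A a b) = 0 := by exact_mod_cast h
  ext a b
  have ha := (Finset.sum_eq_zero_iff_of_nonneg (fun a _ => Finset.sum_nonneg
    (fun b _ => Complex.normSq_nonneg (A a b)))).mp h' a (Finset.mem_univ a)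
  have hb := (Finset.sum_eq_zero_iff_of_nonneg
    (fun b _ => Complex.normSq_nonneg (A a b))).mp ha b (Finset.mem_univ b)
  simpa using Complex.normSq_eq_zero.mp hb

lemma frob_star (A B : Matrix ι ι ℂ) : (Aᴴ * B).trace = star ((Bᴴ * A).trace) := by
  rw [← Matrix.trace_conjTranspose, conjTranspose_mul, conjTranspose_conjTranspose]

lemma bpS_conjTranspose (r : ι → Fin nr) (c : ι → Fin m) (k l : Fin m) :
    (bpS r c k l)ᴴ = bpS r c l k := by
  ext a b
  simp only [conjTranspose_apply, bpS, of_apply]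
  have : (c b = k ∧ c a = l ∧ r b = r a) ↔ (c a = l ∧ c b = k ∧ r a = r b) := by
    constructor <;> rintro ⟨h1, h2, h3⟩ <;> exact ⟨h2, h1, h3.symm⟩
  rw [apply_ite (star : ℂ → ℂ), star_one, star_zero]
  exact if_congr this rfl rfl

lemma cgT_apply (r : ι → Fin nr) (c : ι → Fin m) (ρ : Matrix ι ι ℂ) (k l : Fin m) :
    (cgT r c ρ) l k = (bpS r c k l * ρ).trace := by
  simp [cgT, Matrix.sum_apply, Matrix.single, ite_and, Finset.sum_ite_eq, and_comm]

lemma mem_ker_cgT_iff (r : ι → Fin nr) (c : ι → Fin m) (ρ : Matrix ι ι ℂ) :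
    ρ ∈ LinearMap.ker (cgT r c) ↔ ∀ k l, ((bpS r c k l)ᴴ * ρ).trace = 0 := by
  rw [LinearMap.mem_ker]
  constructor
  · intro h k l
    rw [bpS_conjTranspose, ← cgT_apply r c ρ l k, h, Matrix.zero_apply]
  · intro h
    ext l k
    rw [cgT_apply, ← bpS_conjTranspose, h, Matrix.zero_apply]

lemma bpS_orth (r : ι → Fin nr) (c : ι → Fin m) {k l k' l' : Fin m}
    (h : (k, l) ≠ (k', l')) :
    ((bpS r c k l)ᴴ * bpS r c k' l').trace = 0 := by
  rw [frob_eq]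
  refine Finset.sum_eq_zero fun a _ => Finset.sum_eq_zero fun b _ => ?_
  simp only [bpS, of_apply]
  split_ifs with h1 h2
  · exact absurd (Prod.ext_iff.mpr ⟨h1.1.symm.trans h2.1, h1.2.1.symm.trans h2.2.1⟩) h
  all_goals simp

lemma frob_sum_smul (r : ι → Fin nr) (c : ι → Fin m) (f : Fin m → Fin m → ℂ)
    (k' l' : Fin m) :
    ((bpS r c k' l')ᴴ * ∑ k, ∑ l, f k l • bpS r c k l).trace
      = f k' l' * ((bpS r c k' l')ᴴ * bpS r c k' l').trace := by
  simp only [Matrix.mul_sum, Matrix.mul_smul, Matrix.trace_sum, Matrix.trace_smul,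
    smul_eq_mul]
  rw [Finset.sum_eq_single k' (fun k _ hk => Finset.sum_eq_zero fun l _ => by
      rw [bpS_orth r c (by simp [Ne.symm hk]), mul_zero])
    (fun h => absurd (Finset.mem_univ _) h),
    Finset.sum_eq_single l' (fun l _ hl => by
      rw [bpS_orth r c (by simpa using Ne.symm hl), mul_zero])
    (fun h => absurd (Finset.mem_univ _) h)]

lemma frob_span_zero (r : ι → Fin nr) (c : ι → Fin m) {A : Matrix ι ι ℂ}
    (h : ∀ k l, ((bpS r c k l)ᴴ * A).trace = 0)
    {B : Matrix ι ι ℂ}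
    (hB : B ∈ Submodule.span ℂ {S : Matrix ι ι ℂ | ∃ k l : Fin m, S = bpS r c k l}) :
    (Bᴴ * A).trace = 0 := by
  induction hB using Submodule.span_induction with
  | mem S hS => obtain ⟨k, l, rfl⟩ := hS; exact h k l
  | zero => simp
  | add x y _ _ hx hy => rw [conjTranspose_add, add_mul, trace_add, hx, hy, add_zero]
  | smul t x _ hx =>
      rw [conjTranspose_smul, Matrix.smul_mul, trace_smul, hx, smul_zero]

/-- The projection of `A` onto the span of the bipartition operators. -/
noncomputable def bpProj (r : ι → Fin nr) (c : ι → Fin m) (A : Matrix ι ι ℂ) :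
    Matrix ι ι ℂ :=
  ∑ k, ∑ l, (((bpS r c k l)ᴴ * A).trace / ((bpS r c k l)ᴴ * bpS r c k l).trace) •
    bpS r c k l

lemma bpProj_mem_span (r : ι → Fin nr) (c : ι → Fin m) (A : Matrix ι ι ℂ) :
    bpProj r c A ∈ Submodule.span ℂ {S : Matrix ι ι ℂ | ∃ k l : Fin m, S = bpS r c k l} := by
  refine Submodule.sum_mem _ fun k _ => Submodule.sum_mem _ fun l _ =>
    Submodule.smul_mem _ _ (Submodule.subset_span ⟨k, l, rfl⟩)

lemma bpProj_residual (r : ι → Fin nr) (c : ι → Fin m) (A : Matrix ι ι ℂ) (k l : Fin m) :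
    ((bpS r c k l)ᴴ * (A - bpProj r c A)).trace = 0 := by
  rw [Matrix.mul_sub, trace_sub, bpProj, frob_sum_smul]
  by_cases hn : ((bpS r c k l)ᴴ * bpS r c k l).trace = 0
  · have hz : bpS r c k l = 0 := frob_self_eq_zero hn
    simp [hz]
  · rw [div_mul_cancel₀ _ hn, sub_self]

/-- `(ker T)ᗮ = span ℂ {S k l}` for the quantum coarse-graining map `T` of a bipartition
table; consequently any Moore–Penrose pseudoinverse `T⁺` of `T` yields a projection
`P := T⁺ ∘ T` which is the orthogonal projection onto `span ℂ {S k l}`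
(it fixes the span and vanishes on its orthogonal complement). -/
theorem ker_orth_eq_span_bipartition (r : ι → Fin nr) (c : ι → Fin m)
    (hinj : Function.Injective fun a => (r a, c a))
    (hsurj : Function.Surjective c) :
    frobOrth (LinearMap.ker (cgT r c)) =
      Submodule.span ℂ {S : Matrix ι ι ℂ | ∃ k l : Fin m, S = bpS r c k l} ∧
    ∀ Tplus : Matrix (Fin m) (Fin m) ℂ →ₗ[ℂ] Matrix ι ι ℂ,
      (cgT r c).comp (Tplus.comp (cgT r c)) = cgT r c →
      Tplus.comp ((cgT r c).comp Tplus) = Tplus →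
      (∀ A B : Matrix (Fin m) (Fin m) ℂ,
        ((cgT r c (Tplus A))ᴴ * B).trace = (Aᴴ * cgT r c (Tplus B)).trace) →
      (∀ A B : Matrix ι ι ℂ,
        ((Tplus (cgT r c A))ᴴ * B).trace = (Aᴴ * Tplus (cgT r c B)).trace) →
      (∀ A ∈ Submodule.span ℂ {S : Matrix ι ι ℂ | ∃ k l : Fin m, S = bpS r c k l},
        Tplus (cgT r c A) = A) ∧
      (∀ A : Matrix ι ι ℂ,
        (∀ S ∈ Submodule.span ℂ {S : Matrix ι ι ℂ | ∃ k l : Fin m, S = bpS r c k l},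
          (Sᴴ * A).trace = 0) → Tplus (cgT r c A) = 0) := by
  have hmain : frobOrth (LinearMap.ker (cgT r c)) =
      Submodule.span ℂ {S : Matrix ι ι ℂ | ∃ k l : Fin m, S = bpS r c k l} := by
    apply le_antisymm
    · -- frobOrth (ker T) ≤ span
      intro A hA
      -- D := A - bpProj A lies in ker T
      have hDker : A - bpProj r c A ∈ LinearMap.ker (cgT r c) :=
        (mem_ker_cgT_iff r c _).mpr (bpProj_residual r c A)
      have hDA : ((A - bpProj r c A)ᴴ * A).trace = 0 := hA _ hDker
      have hDP : ((A - bpProj r c A)ᴴ * bpProj r c A).trace = 0 := by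
        rw [frob_star]
        rw [frob_span_zero r c ((mem_ker_cgT_iff r c _).mp hDker) (bpProj_mem_span r c A)]
        simp
      have hDD : ((A - bpProj r c A)ᴴ * (A - bpProj r c A)).trace = 0 := by
        rw [Matrix.mul_sub, trace_sub, hDA, hDP, sub_zero]
      have : A - bpProj r c A = 0 := frob_self_eq_zero hDD
      have hAe : A = bpProj r c A := by rwa [sub_eq_zero] at this
      rw [hAe]
      exact bpProj_mem_span r c A
    · -- span ≤ frobOrth (ker T)
      rw [Submodule.span_le]
      rintro S ⟨k, l, rfl⟩ B hB
      rw [frob_star]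
      rw [(mem_ker_cgT_iff r c B).mp hB k l]
      simp
  refine ⟨hmain, fun Tplus h1 _h2 _h3 h4 => ⟨?_, ?_⟩⟩
  · intro A hA
    set PA := Tplus (cgT r c A) with hPA
    have hTD : cgT r c PA = cgT r c A := DFunLike.congr_fun h1 A
    have hDker : PA - A ∈ LinearMap.ker (cgT r c) := by
      rw [LinearMap.mem_ker, map_sub, hTD, sub_self]
    have hAorth : A ∈ frobOrth (LinearMap.ker (cgT r c)) := hmain ▸ hA
    have hDA : ((PA - A)ᴴ * A).trace = 0 := hAorth _ hDker
    have hDP : ((PA - A)ᴴ * PA).trace = 0 := by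
      rw [conjTranspose_sub, sub_mul, trace_sub]
      have h1' : (PAᴴ * PA).trace = (Aᴴ * PA).trace := by
        have h5 := h4 A PA
        rw [hTD] at h5
        exact h5
      rw [h1', sub_self]
    have hDD : ((PA - A)ᴴ * (PA - A)).trace = 0 := by
      rw [Matrix.mul_sub, trace_sub, hDP, hDA, sub_zero]
    have := frob_self_eq_zero hDD
    rwa [sub_eq_zero] at this
  · intro A hA
    have hker : cgT r c A = 0 := by
      rw [← LinearMap.mem_ker, mem_ker_cgT_iff]
      exact fun k l => hA _ (Submodule.subset_span ⟨k, l, rfl⟩)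
    rw [hker, map_zero]
end

section
/- Suppose in addition the bipartition table is top-justified: for every column k : Fin m, the set of rows occupied by column k equals { i : Fin nr | (i : ℕ) < h k }, where h k := card { a : ι | c a = k } is the height of column k. Then for all k l : Fin m, the quantum coarse-graining map sends the bipartition operator S k l to T (S k l) = (min (h k) (h l)) • stdBasisMatrix k l 1. -/
open Matrix

variable {ι : Type*} [Fintype ι] [DecidableEq ι] {nr m : ℕ}

/-- If the bipartition table is top-justified (for every column `k`, the set of occupied
rows is exactly `{i | i < h k}` where `h k` is the height of column `k`), then
`T (S k l) = min (h k) (h l) • stdBasisMatrix k l 1`. -/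
theorem cgT_bpS_eq_min_smul (r : ι → Fin nr) (c : ι → Fin m)
    (hinj : Function.Injective fun a => (r a, c a))
    (hsurj : Function.Surjective c)
    (htop : ∀ k : Fin m,
      {i : Fin nr | ∃ a : ι, c a = k ∧ r a = i} =
        {i : Fin nr | (i : ℕ) < Fintype.card {a : ι // c a = k}}) :
    ∀ k l : Fin m,
      cgT r c (bpS r c k l) =
        ((min (Fintype.card {a : ι // c a = k}) (Fintype.card {a : ι // c a = l}) : ℕ) : ℂ) •
          Matrix.single k l 1 := by
  intro k l
  set h : Fin m → ℕ := fun k => Fintype.card {a : ι // c a = k} with hh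
  have hle : ∀ k, h k ≤ nr := by
    intro k
    have hi : Function.Injective (fun a : {a : ι // c a = k} => r a.1) := by
      intro a b hab
      exact Subtype.ext (hinj (Prod.ext hab (a.2.trans b.2.symm)))
    simpa using Fintype.card_le_of_injective _ hi
  have hex : ∀ (k : Fin m) (i : Fin nr), (i : ℕ) < h k → ∃ a, c a = k ∧ r a = i :=
    fun k i hi => (htop k).ge (show i ∈ {i : Fin nr | (i : ℕ) < Fintype.card {a : ι // c a = k}} from hi)
  have hmem : ∀ (a : ι), ((r a : ℕ)) < h (c a) := fun a => (htop (c a)).le ⟨a, rfl, rfl⟩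
  have key : ∀ q p : Fin m, (bpS r c q p * bpS r c k l).trace =
      if p = k ∧ q = l then ((min (h k) (h l) : ℕ) : ℂ) else 0 := by
    intro q p
    have expand : (bpS r c q p * bpS r c k l).trace =
        ∑ x : ι × ι, if (c x.1 = q ∧ c x.2 = p ∧ r x.1 = r x.2) ∧
            (c x.2 = k ∧ c x.1 = l ∧ r x.2 = r x.1) then (1 : ℂ) else 0 := by
      rw [Matrix.trace, Fintype.sum_prod_type]
      simp only [Matrix.diag, Matrix.mul_apply, bpS, Matrix.of_apply,
        ite_zero_mul_ite_zero, one_mul]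
    rw [expand]
    by_cases hpq : p = k ∧ q = l
    · obtain ⟨rfl, rfl⟩ := hpq
      rw [if_pos ⟨rfl, rfl⟩, Finset.sum_boole]
      congr 1
      rw [← Fintype.card_subtype]
      have hbij : Function.Bijective
          (fun x : {x : ι × ι // (c x.1 = q ∧ c x.2 = p ∧ r x.1 = r x.2) ∧
              (c x.2 = p ∧ c x.1 = q ∧ r x.2 = r x.1)} =>
            (⟨r x.1.1, by
              obtain ⟨⟨h1, h2, h3⟩, _⟩ := x.2
              refine lt_min ?_ ?_
              · have := hmem x.1.2
                rw [h2] at this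
                rw [h3]
                exact this
              · have := hmem x.1.1
                rwa [h1] at this⟩ :
              {i : Fin nr // (i : ℕ) < min (h p) (h q)})) := by
        constructor
        · rintro ⟨⟨a, b⟩, ⟨h1, h2, h3⟩, _⟩ ⟨⟨a', b'⟩, ⟨h1', h2', h3'⟩, _⟩ hxy
          have hr : r a = r a' := congrArg Subtype.val hxy
          have ha : a = a' := hinj (Prod.ext hr (h1.trans h1'.symm))
          have hb : b = b' := hinj (Prod.ext ((h3.symm.trans hr).trans h3') (h2.trans h2'.symm))
          simp [ha, hb]
        · rintro ⟨i, hi⟩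
          obtain ⟨b, hbc, hbr⟩ := hex p i (lt_of_lt_of_le hi (min_le_left _ _))
          obtain ⟨a, hac, har⟩ := hex q i (lt_of_lt_of_le hi (min_le_right _ _))
          refine ⟨⟨(a, b), ⟨hac, hbc, har.trans hbr.symm⟩,
            hbc, hac, hbr.trans har.symm⟩, ?_⟩
          exact Subtype.ext har
      rw [Fintype.card_of_bijective hbij]
      have e2 : {i : Fin nr // (i : ℕ) < min (h p) (h q)} ≃ Fin (min (h p) (h q)) :=
        { toFun := fun i => ⟨i.1, i.2⟩
          invFun := fun j => ⟨⟨j.1, j.2.trans_le ((min_le_left _ _).trans (hle p))⟩, j.2⟩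
          left_inv := fun i => by ext; rfl
          right_inv := fun j => rfl }
      rw [Fintype.card_congr e2, Fintype.card_fin]
    · rw [if_neg hpq]
      apply Finset.sum_eq_zero
      intro x _
      rw [if_neg]
      rintro ⟨⟨h1, h2, h3⟩, h4, h5, h6⟩
      exact hpq ⟨h2 ▸ h4, h1 ▸ h5⟩
  have hT : cgT r c (bpS r c k l) = ∑ k' : Fin m, ∑ l' : Fin m,
      (bpS r c k' l' * bpS r c k l).trace • Matrix.single l' k' (1 : ℂ) := rfl
  rw [hT]
  ext p q
  simp only [Matrix.sum_apply, Matrix.smul_apply, Matrix.single, Matrix.of_apply,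
    smul_eq_mul, mul_ite, mul_one, mul_zero, key]
  clear key hmem hex hle hT
  simp only [ite_and, Finset.sum_ite_eq', Finset.mem_univ, if_true]
  simp only [hh, eq_comm]
end

section
/- Let 𝒮 be a ℂ-linear subspace of Matrix ι ι ℂ (for instance the span of the bipartition operators of a coarse-graining), let P : Matrix ι ι ℂ →ₗ[ℂ] Matrix ι ι ℂ be the orthogonal projection onto 𝒮 with respect to the Frobenius inner product ⟨A, B⟩ = trace (Aᴴ * B), let H : Matrix ι ι ℂ be Hermitian (Hᴴ = H), and let L : Matrix ι ι ℂ →ₗ[ℂ] Matrix ι ι ℂ be the generator L X := (−i) • (H * X − X * H). Then P ∘ L = P ∘ L ∘ P if and only if for every S ∈ 𝒮 the commutator H * S − S * H lies in 𝒮. -/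
open Matrix

lemma aux_trace_pos {ι : Type*} [Fintype ι] (A : Matrix ι ι ℂ)
    (h : (Aᴴ * A).trace = 0) : A = 0 := by
  have h1 : (Aᴴ * A).trace = ∑ i, ∑ j, (Complex.normSq (A j i) : ℂ) := by
    simp [Matrix.trace, Matrix.diag, Matrix.mul_apply, Matrix.conjTranspose_apply,
      Complex.normSq_eq_conj_mul_self]
  rw [h1] at h
  have h2 : ∑ i, ∑ j, Complex.normSq (A j i) = 0 := by exact_mod_cast h
  ext j i
  have := (Finset.sum_eq_zero_iff_of_nonneg (fun i _ => Finset.sum_nonneg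
    (fun j _ => Complex.normSq_nonneg _))).mp h2 i (Finset.mem_univ i)
  have := (Finset.sum_eq_zero_iff_of_nonneg (fun j _ => Complex.normSq_nonneg _)).mp
    this j (Finset.mem_univ j)
  simpa [Complex.normSq_eq_zero] using this

lemma aux_key {ι : Type*} [Fintype ι] (H : Matrix ι ι ℂ) (hH : Hᴴ = H)
    (A B : Matrix ι ι ℂ) :
    ((H * A - A * H)ᴴ * B).trace = (Aᴴ * (H * B - B * H)).trace := by
  have h1 : (H * (Aᴴ * B)).trace = ((Aᴴ * B) * H).trace := trace_mul_comm _ _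
  simp only [conjTranspose_sub, conjTranspose_mul, hH, sub_mul, mul_sub, trace_sub,
    Matrix.mul_assoc] at *
  rw [h1]

/-- For `P` the orthogonal projection (w.r.t. the Frobenius inner product
`⟨A, B⟩ = trace (Aᴴ * B)`) onto a subspace `𝒮` of `Matrix ι ι ℂ`, a Hermitian `H`, and
the generator `L X = (−i) • (H * X − X * H)`, the compatibility condition
`P ∘ L = P ∘ L ∘ P` holds iff `[H, S] ∈ 𝒮` for every `S ∈ 𝒮`. -/
theorem compatibility_iff_commutator_mem {ι : Type*} [Fintype ι] [DecidableEq ι]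
    (𝒮 : Submodule ℂ (Matrix ι ι ℂ))
    (P L : Matrix ι ι ℂ →ₗ[ℂ] Matrix ι ι ℂ)
    (hidem : P.comp P = P)
    (hadj : ∀ A B : Matrix ι ι ℂ, ((P A)ᴴ * B).trace = (Aᴴ * P B).trace)
    (hrange : LinearMap.range P = 𝒮)
    (H : Matrix ι ι ℂ) (hH : Hᴴ = H)
    (hL : ∀ X : Matrix ι ι ℂ, L X = (-Complex.I) • (H * X - X * H)) :
    P.comp L = (P.comp L).comp P ↔ ∀ S ∈ 𝒮, H * S - S * H ∈ 𝒮 := by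
  have hfix : ∀ S ∈ 𝒮, P S = S := by
    intro S hS
    rw [← hrange] at hS
    obtain ⟨X, rfl⟩ := hS
    exact DFunLike.congr_fun hidem X
  constructor
  · intro hPL S hS
    set T := H * S - S * H with hT
    set W := T - P T with hW
    have hPW : P W = 0 := by
      have := DFunLike.congr_fun hidem T
      simp only [LinearMap.comp_apply] at this
      simp [hW, map_sub, this]
    have hPLW : P (L W) = 0 := by
      have := DFunLike.congr_fun hPL W
      simp only [LinearMap.comp_apply, hPW, map_zero] at this
      rw [this]
    have hPC : P (H * W - W * H) = 0 := by
      have h2 : P (L W) = (-Complex.I) • P (H * W - W * H) := by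
        rw [hL W, _root_.map_smul]
      rw [hPLW] at h2
      rcases smul_eq_zero.mp h2.symm with h | h
      · exact absurd h (by simp [Complex.I_ne_zero])
      · exact h
    have hWW : (Wᴴ * W).trace = 0 := by
      have e2 : (Wᴴ * P T).trace = 0 := by
        rw [← hadj W T, hPW]
        simp
      have e3 : (Wᴴ * T).trace = 0 := by
        rw [hT, ← aux_key H hH W S, ← hfix S hS, ← hadj, hPC]
        simp
      calc (Wᴴ * W).trace = (Wᴴ * T).trace - (Wᴴ * P T).trace := by
            rw [hW]; simp [mul_sub, trace_sub]
        _ = 0 := by rw [e2, e3, sub_zero]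
    have hW0 : W = 0 := aux_trace_pos W hWW
    have : T = P T := by
      have := sub_eq_zero.mp hW0
      exact this
    rw [← hrange]
    exact ⟨H * S - S * H, this.symm⟩
  · intro hcom
    apply LinearMap.ext
    intro X
    simp only [LinearMap.comp_apply]
    set Y := X - P X with hY
    have hPY : P Y = 0 := by
      have := DFunLike.congr_fun hidem X
      simp only [LinearMap.comp_apply] at this
      simp [hY, map_sub, this]
    have hLX : L X = L Y + L (P X) := by rw [hY]; simp [map_sub]
    rw [hLX, map_add]
    suffices h : P (L Y) = 0 by rw [h, zero_add]
    set U := P (L Y) with hU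
    have hUm : U ∈ 𝒮 := by rw [← hrange]; exact ⟨L Y, rfl⟩
    have hPU : P U = U := hfix U hUm
    have hLU : L U ∈ 𝒮 := by
      rw [hL U]
      exact Submodule.smul_mem _ _ (hcom U hUm)
    have hUU : (Uᴴ * U).trace = 0 := by
      have e1 : (Uᴴ * U).trace = (Uᴴ * L Y).trace := by
        rw [hU]
        rw [← hadj (P (L Y)) (L Y)]
        rw [show P (P (L Y)) = P (L Y) from DFunLike.congr_fun hidem (L Y)]
      have e2 : (Uᴴ * L Y).trace = (-Complex.I) * ((H * U - U * H)ᴴ * Y).trace := by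
        rw [hL Y, aux_key H hH U Y]
        simp [Matrix.mul_smul, trace_smul]
      have e3 : ((H * U - U * H)ᴴ * Y).trace = 0 := by
        rw [← hfix _ (hcom U hUm), hadj, hPY]
        simp
      rw [e1, e2, e3, mul_zero]
    have := aux_trace_pos U hUU
    rw [hU] at this
    exact this
end

section
/- Let G be a finite group and U : G →* Matrix d d ℂ a representation by unitary matrices (so (U g)ᴴ * U g = 1 for all g). Define 𝒞 := { B | ∀ g, U g * B = B * U g } and 𝒟 := { A | ∀ B ∈ 𝒞, A * B = B * A }. If H : Matrix d d ℂ satisfies U g * H − H * U g ∈ 𝒟 for all g ∈ G, then H decomposes as H = A + B with A ∈ 𝒟 and B ∈ 𝒞; in fact one can take B = (1/|G|) • ∑_{g ∈ G} U g * H * (U g)ᴴ and A = H − B. -/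
open Matrix

/-- The commutant `U(G)'` of a matrix representation `U` of `G`:
all matrices commuting with every `U g`. -/
def repCommutant {d : ℕ} {G : Type*} [Group G]
    (U : G →* Matrix (Fin d) (Fin d) ℂ) : Set (Matrix (Fin d) (Fin d) ℂ) :=
  {B | ∀ g : G, U g * B = B * U g}

/-- The double commutant `U(G)''`: all matrices commuting with every element
of the commutant `U(G)'`. -/
def repBicommutant {d : ℕ} {G : Type*} [Group G]
    (U : G →* Matrix (Fin d) (Fin d) ℂ) : Set (Matrix (Fin d) (Fin d) ℂ) :=
  {A | ∀ B ∈ repCommutant U, A * B = B * A}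

/-- If `U` is a unitary representation of a finite group `G` and
`[U g, H] ∈ U(G)''` for all `g`, then `H = A + B` with `A ∈ U(G)''` and `B ∈ U(G)'`;
in fact one can take `B = (1/|G|) • ∑ g, U g * H * (U g)ᴴ`. -/
theorem compatible_hamiltonian_decomposition {d : ℕ} (G : Type*) [Group G] [Fintype G]
    (U : G →* Matrix (Fin d) (Fin d) ℂ)
    (hU : ∀ g : G, (U g)ᴴ * U g = 1)
    (H : Matrix (Fin d) (Fin d) ℂ)
    (hH : ∀ g : G, U g * H - H * U g ∈ repBicommutant U) :
    ∃ A B : Matrix (Fin d) (Fin d) ℂ,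
      H = A + B ∧ A ∈ repBicommutant U ∧ B ∈ repCommutant U ∧
      B = (1 / (Fintype.card G : ℂ)) • ∑ g : G, U g * H * (U g)ᴴ ∧
      A = H - B := by
  have hinv : ∀ g : G, (U g)ᴴ = U g⁻¹ := by
    intro g
    have h1 : U g⁻¹ * U g = 1 := by rw [← _root_.map_mul, inv_mul_cancel, _root_.map_one]
    calc (U g)ᴴ = (U g)ᴴ * (U g * U g⁻¹) := by
          rw [mul_eq_one_comm.mp h1, mul_one]
      _ = ((U g)ᴴ * U g) * U g⁻¹ := by rw [mul_assoc]
      _ = U g⁻¹ := by rw [hU g, one_mul]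
  have hcard : (Fintype.card G : ℂ) ≠ 0 := Nat.cast_ne_zero.mpr Fintype.card_ne_zero
  set c : ℂ := 1 / (Fintype.card G : ℂ) with hc
  set B : Matrix (Fin d) (Fin d) ℂ := c • ∑ g : G, U g * H * (U g)ᴴ with hBdef
  have hBsum : B = c • ∑ g : G, U g * H * U g⁻¹ := by
    simp only [hBdef, hinv]
  have hBcomm : B ∈ repCommutant U := by
    intro h
    rw [hBsum, Matrix.mul_smul, Matrix.smul_mul, Finset.mul_sum, Finset.sum_mul]
    congr 1
    refine Fintype.sum_equiv (Equiv.mulLeft h) _ _ ?_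
    intro g
    simp only [Equiv.coe_mulLeft]
    have hh : U h⁻¹ * U h = 1 := by rw [← _root_.map_mul, inv_mul_cancel, _root_.map_one]
    rw [_root_.mul_inv_rev, _root_.map_mul, _root_.map_mul, mul_assoc (U h * U g * H), mul_assoc (U g⁻¹),
      hh, mul_one]
    simp [mul_assoc]
  have hterm : ∀ g : G, ∀ M ∈ repCommutant U,
      (H - U g * H * U g⁻¹) * M = M * (H - U g * H * U g⁻¹) := by
    intro g M hM
    have hC : (U g * H - H * U g) * M = M * (U g * H - H * U g) := hH g M hM
    have hUM : U g⁻¹ * M = M * U g⁻¹ := hM g⁻¹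
    have h1 : U g * U g⁻¹ = 1 := by rw [← _root_.map_mul, mul_inv_cancel, _root_.map_one]
    have key : H - U g * H * U g⁻¹ = -((U g * H - H * U g) * U g⁻¹) := by
      rw [sub_mul, mul_assoc H, h1, mul_one, neg_sub]
    rw [key, neg_mul, mul_neg, neg_inj, mul_assoc, hUM, ← mul_assoc, hC, mul_assoc]
  have hHB : H - B = c • ∑ g : G, (H - U g * H * U g⁻¹) := by
    rw [hBsum, Finset.sum_sub_distrib, Finset.sum_const, smul_sub, Finset.card_univ,
      ← Nat.cast_smul_eq_nsmul ℂ, smul_smul, hc, one_div_mul_cancel hcard, one_smul]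
  have hA : H - B ∈ repBicommutant U := by
    intro M hM
    rw [hHB, Matrix.smul_mul, Matrix.mul_smul, Finset.sum_mul, Finset.mul_sum]
    congr 1
    exact Finset.sum_congr rfl fun g _ => hterm g M hM
  exact ⟨H - B, B, (sub_add_cancel H B).symm, hA, hBcomm, hBdef, rfl⟩
end

section
/- Let T : Matrix ι ι ℂ →ₗ[ℂ] Matrix (Fin m) (Fin m) ℂ be the quantum coarse-graining map of a bipartition table. Then its Hermitian adjoint with respect to the Frobenius inner products on both spaces is given by (adjoint T) O = ∑_{k l : Fin m} (O k l) • S k l for every O : Matrix (Fin m) (Fin m) ℂ; that is, trace (Oᴴ * T ρ) = trace ((∑_{k l} (O k l) • S k l)ᴴ * ρ) for all ρ and O. -/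
open Matrix

variable {ι : Type*} [Fintype ι] [DecidableEq ι] {nr m : ℕ}

/-- The Hermitian adjoint of the quantum coarse-graining map `T` with respect to the
Frobenius inner products is `O ↦ ∑ k l, (O k l) • S k l`:
`⟨O, T ρ⟩ = ⟨∑ k l, (O k l) • S k l, ρ⟩` for all `ρ` and `O`. -/
theorem cgT_adjoint (r : ι → Fin nr) (c : ι → Fin m)
    (hinj : Function.Injective fun a => (r a, c a))
    (hsurj : Function.Surjective c) :
    ∀ (ρ : Matrix ι ι ℂ) (O : Matrix (Fin m) (Fin m) ℂ),
      (Oᴴ * cgT r c ρ).trace =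
        ((∑ k : Fin m, ∑ l : Fin m, O k l • bpS r c k l)ᴴ * ρ).trace := by
  intro ρ O
  have hS : ∀ k l, (bpS r c k l)ᴴ = bpS r c l k := by
    intro k l
    ext a b
    simp only [conjTranspose_apply, bpS, of_apply]
    rw [apply_ite (star : ℂ → ℂ), star_one, star_zero]
    refine if_congr ⟨?_, ?_⟩ rfl rfl
    · rintro ⟨h1, h2, h3⟩; exact ⟨h2, h1, h3.symm⟩
    · rintro ⟨h1, h2, h3⟩; exact ⟨h2, h1, h3.symm⟩
  have htr : ∀ (k l : Fin m), (Oᴴ * Matrix.single l k (1:ℂ)).trace = star (O l k) := by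
    intro k l
    rw [Matrix.trace_mul_comm]
    simp [Matrix.trace, Matrix.diag, Matrix.mul_apply, Matrix.single,
      conjTranspose_apply, ite_and, Finset.sum_ite_eq, Finset.sum_ite_eq']
  show (Oᴴ * ∑ k : Fin m, ∑ l : Fin m, (bpS r c k l * ρ).trace • Matrix.single l k 1).trace = _
  simp only [Matrix.mul_sum, trace_sum, Matrix.mul_smul, trace_smul, htr,
    conjTranspose_sum, conjTranspose_smul, hS, Matrix.sum_mul, Matrix.smul_mul, smul_eq_mul]
  rw [Finset.sum_comm]
  refine Finset.sum_congr rfl fun l _ => Finset.sum_congr rfl fun k _ => ?_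
  ring
end
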